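/- Let q : (0,∞) → ℝ be smooth with q' > 0, q'' < 0 strictly increasing (q⁽³⁾ > 0). Set f_n(x) = q(x) + (N_n − x)²/(2nσ²), with x_n* defined by q''(x_n*) = −1/(nσ²) and N_n* = x_n* + nσ² q'(x_n*). If N_n > N_n* and lim sup N_n/(nσ²) < lim_{x→0⁺} q'(x), then f_n has exactly two critical points x_n' < x_n* < x_n < N_n, where x_n' is the maximizer of f_n on (0, x_n*) and x_n is the minimizer of f_n on (x_n*, ∞). -/

import Mathlib

/-!
Here `f' = g` with `g y = q' y + (y - N) / s`, and `g' = q'' + 1 / s` is strictly increasing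
and vanishes at `xstar`. So `g` strictly decreases on `(0, xstar]` and strictly increases on
`[xstar, ∞)`, while `g xstar < 0` is exactly `Nstar < N`. As `g → L - N / s > 0` at `0⁺` and
`g N = q' N > 0`, `g` has exactly one zero on each side of `xstar`; the sign of `g` around
them makes the left zero a maximizer and the right zero a minimizer of `f`.
-/

open Real Set Filter Topology

section DerivativeSign

variable {f f' : ℝ → ℝ} {s : Set ℝ} {c : ℝ}

theorem strictMonoOn_of_hasDerivAt_pos (hs : Convex ℝ s) (hso : IsOpen s)
    (hf : ∀ x ∈ s, HasDerivAt f (f' x) x) (hf' : ∀ x ∈ s, 0 < f' x) : StrictMonoOn f s :=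
  strictMonoOn_of_deriv_pos hs (fun x hx => (hf x hx).continuousAt.continuousWithinAt)
    fun x hx => by
      rw [hso.interior_eq] at hx
      rw [(hf x hx).deriv]
      exact hf' x hx

theorem strictAntiOn_Iic_and_strictMonoOn_Ici_of_hasDerivAt (hs : Convex ℝ s)
    (hf : ∀ x ∈ s, HasDerivAt f (f' x) x) (hf' : StrictMonoOn f' s) (hc : c ∈ s)
    (hf'c : f' c = 0) : StrictAntiOn f (s ∩ Iic c) ∧ StrictMonoOn f (s ∩ Ici c) := by
  have hcont : ContinuousOn f s := fun x hx => (hf x hx).continuousAt.continuousWithinAt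
  constructor
  · refine strictAntiOn_of_deriv_neg (hs.inter (convex_Iic c)) (hcont.mono inter_subset_left)
      fun x hx => ?_
    have hxc : x < c := by simpa using interior_mono inter_subset_right hx
    have hxs : x ∈ s := (interior_subset hx).1
    rw [(hf x hxs).deriv, ← hf'c]
    exact hf' hxs hc hxc
  · refine strictMonoOn_of_deriv_pos (hs.inter (convex_Ici c)) (hcont.mono inter_subset_left)
      fun x hx => ?_
    have hcx : c < x := by simpa using interior_mono inter_subset_right hx
    have hxs : x ∈ s := (interior_subset hx).1
    rw [(hf x hxs).deriv, ← hf'c]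
    exact hf' hc hxs hcx

theorem isMinOn_of_hasDerivAt_of_strictMonoOn (hs : Convex ℝ s)
    (hf : ∀ x ∈ s, HasDerivAt f (f' x) x) (hf' : StrictMonoOn f' s) (hc : c ∈ s)
    (hf'c : f' c = 0) : IsMinOn f s c := by
  obtain ⟨hanti, hmono⟩ := strictAntiOn_Iic_and_strictMonoOn_Ici_of_hasDerivAt hs hf hf' hc hf'c
  intro x hx
  rcases le_total x c with hxc | hcx
  · exact hanti.antitoneOn ⟨hx, hxc⟩ ⟨hc, self_mem_Iic⟩ hxc
  · exact hmono.monotoneOn ⟨hc, self_mem_Ici⟩ ⟨hx, hcx⟩ hcx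

theorem isMaxOn_of_hasDerivAt_of_strictAntiOn (hs : Convex ℝ s)
    (hf : ∀ x ∈ s, HasDerivAt f (f' x) x) (hf' : StrictAntiOn f' s) (hc : c ∈ s)
    (hf'c : f' c = 0) : IsMaxOn f s c := by
  have hmin : IsMinOn (fun x => -f x) s c :=
    isMinOn_of_hasDerivAt_of_strictMonoOn hs (fun x hx => (hf x hx).neg) hf'.neg
      hc (by simp [hf'c])
  simpa using hmin.neg

end DerivativeSign

theorem exists_zero_of_tendsto_nhdsGT_pos {g : ℝ → ℝ} {a b l : ℝ} (hab : a < b)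
    (hg : ContinuousOn g (Ioc a b)) (hlim : Tendsto g (𝓝[>] a) (𝓝 l)) (hl : 0 < l)
    (hb : g b < 0) : ∃ x ∈ Ioo a b, g x = 0 := by
  obtain ⟨c, hgc, hc⟩ :=
    ((hlim.eventually (eventually_gt_nhds hl)).and (Ioo_mem_nhdsGT hab)).exists
  obtain ⟨x, hx, hgx⟩ := intermediate_value_Ioo' hc.2.le
    (hg.mono (Icc_subset_Ioc_iff hc.2.le |>.2 ⟨hc.1, le_rfl⟩)) ⟨hb, hgc⟩
  exact ⟨x, ⟨hc.1.trans hx.1, hx.2⟩, hgx⟩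

theorem hasDerivAt_add_sub_sq_div {q : ℝ → ℝ} {q' N s x : ℝ} (hs : s ≠ 0)
    (hq : HasDerivAt q q' x) :
    HasDerivAt (fun y => q y + (N - y) ^ 2 / (2 * s)) (q' + (x - N) / s) x := by
  have hsq : HasDerivAt (fun y => (N - y) ^ 2 / (2 * s)) (2 * (N - x) * (-1) / (2 * s)) x := by
    simpa using (((hasDerivAt_id x).const_sub N).fun_pow 2).div_const (2 * s)
  refine (hq.fun_add hsq).congr_deriv ?_
  field_simp
  ring

theorem strictAntiOn_Iic_and_strictMonoOn_Ici_add_sub_div {q' q'' q''' : ℝ → ℝ} {s N c : ℝ}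
    (hq' : ∀ x ∈ Ioi (0:ℝ), HasDerivAt q' (q'' x) x)
    (hq'' : ∀ x ∈ Ioi (0:ℝ), HasDerivAt q'' (q''' x) x)
    (hq''' : ∀ x ∈ Ioi (0:ℝ), 0 < q''' x) (hc : 0 < c) (hq''c : q'' c = -(1 / s)) :
    StrictAntiOn (fun y => q' y + (y - N) / s) (Ioi 0 ∩ Iic c) ∧
      StrictMonoOn (fun y => q' y + (y - N) / s) (Ioi 0 ∩ Ici c) := by
  have hq''mono : StrictMonoOn (fun y => q'' y + 1 / s) (Ioi 0) := fun y hy z hz hyz =>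
    add_lt_add_left
      (strictMonoOn_of_hasDerivAt_pos (convex_Ioi 0) isOpen_Ioi hq'' hq''' hy hz hyz) _
  refine strictAntiOn_Iic_and_strictMonoOn_Ici_of_hasDerivAt (convex_Ioi 0) (fun y hy => ?_)
    hq''mono hc (by simp [hq''c])
  exact (hq' y hy).add (((hasDerivAt_id y).sub_const N).div_const s)

theorem stmt5_general (q q' q'' q''' : ℝ → ℝ) (s N xstar Nstar L : ℝ) (f : ℝ → ℝ)
    (hs : 0 < s)
    (hq : ∀ x ∈ Ioi (0:ℝ), HasDerivAt q (q' x) x)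
    (hq' : ∀ x ∈ Ioi (0:ℝ), HasDerivAt q' (q'' x) x)
    (hq'' : ∀ x ∈ Ioi (0:ℝ), HasDerivAt q'' (q''' x) x)
    (hq'pos : ∀ x ∈ Ioi (0:ℝ), 0 < q' x)
    (hq'''pos : ∀ x ∈ Ioi (0:ℝ), 0 < q''' x)
    (hxstar : xstar ∈ Ioi (0:ℝ))
    (hxdef : q'' xstar = -(1 / s))
    (hNstar : Nstar = xstar + s * q' xstar)
    (hN : Nstar < N)
    (hlim : Tendsto q' (nhdsWithin 0 (Ioi 0)) (𝓝 L))
    (hNL : N / s < L)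
    (hf : f = fun y => q y + (N - y) ^ 2 / (2 * s)) :
    ∃ x' x : ℝ, x' ∈ Ioo (0:ℝ) xstar ∧ x ∈ Ioo xstar N ∧
      deriv f x' = 0 ∧ deriv f x = 0 ∧
      (∀ y ∈ Ioi (0:ℝ), deriv f y = 0 → y = x' ∨ y = x) ∧
      IsMaxOn f (Ioo (0:ℝ) xstar) x' ∧
      IsMinOn f (Ioi xstar) x := by
  set g : ℝ → ℝ := fun y => q' y + (y - N) / s
  have hfg : ∀ y ∈ Ioi (0:ℝ), HasDerivAt f (g y) y := fun y hy =>
    hf ▸ hasDerivAt_add_sub_sq_div hs.ne' (hq y hy)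
  obtain ⟨hganti, hgmono⟩ := strictAntiOn_Iic_and_strictMonoOn_Ici_add_sub_div hq' hq''
    hq'''pos hxstar hxdef (N := N)
  have hgcont : ContinuousOn g (Ioi 0) := fun y hy =>
    (hq' y hy).continuousAt.continuousWithinAt.add (by fun_prop)
  have hgxstar : g xstar < 0 := by
    have : (xstar - N) / s < -q' xstar := by rw [div_lt_iff₀ hs]; linarith
    simp only [g]
    linarith
  have hxN : xstar < N := by nlinarith [hq'pos xstar hxstar]
  have hgN : 0 < g N := by simpa [g] using hq'pos N (lt_trans hxstar hxN)
  have hglim : Tendsto g (𝓝[>] 0) (𝓝 (L + (0 - N) / s)) :=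
    hlim.add (tendsto_nhdsWithin_of_tendsto_nhds
      (((continuous_id.sub continuous_const).div_const s).tendsto 0))
  obtain ⟨x', hx', hgx'⟩ := exists_zero_of_tendsto_nhdsGT_pos hxstar
    (hgcont.mono fun y hy => hy.1) hglim (by rw [zero_sub, neg_div]; linarith) hgxstar
  obtain ⟨x, hx, hgx⟩ := intermediate_value_Ioo hxN.le
    (hgcont.mono fun y hy => lt_of_lt_of_le hxstar hy.1) ⟨hgxstar, hgN⟩
  have hx0 : 0 < x := lt_trans hxstar hx.1
  refine ⟨x', x, hx', hx, (hfg x' hx'.1).deriv.trans hgx', (hfg x hx0).deriv.trans hgx,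
    fun y hy hfy => ?_, ?_, ?_⟩
  · rw [(hfg y hy).deriv] at hfy
    rcases le_or_gt y xstar with hyx | hxy
    · exact .inl (hganti.injOn ⟨hy, hyx⟩ ⟨hx'.1, hx'.2.le⟩ (hfy.trans hgx'.symm))
    · exact .inr (hgmono.injOn ⟨hy, hxy.le⟩ ⟨hx0, hx.1.le⟩ (hfy.trans hgx.symm))
  · exact isMaxOn_of_hasDerivAt_of_strictAntiOn (convex_Ioo 0 xstar) (fun y hy => hfg y hy.1)
      (hganti.mono fun y hy => ⟨hy.1, hy.2.le⟩) hx' hgx'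
  · exact isMinOn_of_hasDerivAt_of_strictMonoOn (convex_Ioi xstar)
      (fun y (hy : xstar < y) => hfg y (lt_trans hxstar hy))
      (hgmono.mono fun y (hy : xstar < y) => ⟨lt_trans hxstar hy, hy.le⟩) hx.1 hgx

/-- Lemma 2.2(c): if N > N* and N/(nσ²) stays below lim_{x→0⁺} q'(x), then f_n
has exactly two critical points x' < x* < x < N, with x' the maximizer on
(0, x*) and x the minimizer on (x*, ∞). -/
theorem stmt5 (q q' q'' q''' : ℝ → ℝ) (s N xstar Nstar L : ℝ) (f : ℝ → ℝ)
    (hs : 0 < s)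
    (hq : ∀ x ∈ Ioi (0:ℝ), HasDerivAt q (q' x) x)
    (hq' : ∀ x ∈ Ioi (0:ℝ), HasDerivAt q' (q'' x) x)
    (hq'' : ∀ x ∈ Ioi (0:ℝ), HasDerivAt q'' (q''' x) x)
    (hq'pos : ∀ x ∈ Ioi (0:ℝ), 0 < q' x)
    (hq''neg : ∀ x ∈ Ioi (0:ℝ), q'' x < 0)
    (hq'''pos : ∀ x ∈ Ioi (0:ℝ), 0 < q''' x)
    (hxstar : xstar ∈ Ioi (0:ℝ))
    (hxdef : q'' xstar = -(1 / s))
    (hNstar : Nstar = xstar + s * q' xstar)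
    (hN : Nstar < N)
    (hlim : Tendsto q' (nhdsWithin 0 (Ioi 0)) (𝓝 L))
    (hNL : N / s < L)
    (hf : f = fun y => q y + (N - y) ^ 2 / (2 * s)) :
    ∃ x' x : ℝ, x' ∈ Ioo (0:ℝ) xstar ∧ x ∈ Ioo xstar N ∧
      deriv f x' = 0 ∧ deriv f x = 0 ∧
      (∀ y ∈ Ioi (0:ℝ), deriv f y = 0 → y = x' ∨ y = x) ∧
      IsMaxOn f (Ioo (0:ℝ) xstar) x' ∧
      IsMinOn f (Ioi xstar) x :=
  stmt5_general q q' q'' q''' s N xstar Nstar L f hs hq hq' hq'' hq'pos hq'''pos hxstar hxdef hNstar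
    hN hlim hNL hf
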